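/- Let P be an n×n real symmetric positive semidefinite matrix and C an m×n real matrix. If C has full row rank and ker(P) ∩ ker(C) = {0}, then the KKT matrix M = [[P, Cᵀ], [C, 0]] is nonsingular (its determinant is nonzero). -/
import Mathlib

open Matrix

/-- Let `P` be an `n × n` real symmetric positive semidefinite matrix and `C` an `m × n`
real matrix. If `C` has full row rank (the map `x ↦ C x` is surjective) and
`ker(P) ∩ ker(C) = {0}`, then the KKT matrix `M = [[P, Cᵀ], [C, 0]]` is nonsingular,
i.e. its determinant is nonzero. -/
theorem kkt_matrix_nonsingular {n m : ℕ}
    (P : Matrix (Fin n) (Fin n) ℝ) (C : Matrix (Fin m) (Fin n) ℝ)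
    (hP : P.PosSemidef)
    (hC : Function.Surjective C.mulVecLin)
    (hker : LinearMap.ker P.mulVecLin ⊓ LinearMap.ker C.mulVecLin = ⊥) :
    (Matrix.fromBlocks P Cᵀ C (0 : Matrix (Fin m) (Fin m) ℝ)).det ≠ 0 := by
  rw [Ne, ← Matrix.exists_mulVec_eq_zero_iff]
  rintro ⟨v, hv, hMv⟩
  set x : Fin n → ℝ := v ∘ Sum.inl with hx
  set y : Fin m → ℝ := v ∘ Sum.inr with hy
  have hv' : v = Sum.elim x y := by ext (i | j) <;> rfl
  rw [hv', Matrix.fromBlocks_mulVec] at hMv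
  have h1 : P *ᵥ x + Cᵀ *ᵥ y = 0 := by
    ext i; simpa using congrFun hMv (Sum.inl i)
  have h2 : C *ᵥ x = 0 := by
    ext j; simpa using congrFun hMv (Sum.inr j)
  -- xᵀ P x = 0
  have hPx : P *ᵥ x = 0 := by
    rw [← hP.dotProduct_mulVec_zero_iff]
    have := congrArg (fun w => x ⬝ᵥ w) h1
    simp only [dotProduct_add, dotProduct_zero] at this
    have hct : x ⬝ᵥ Cᵀ *ᵥ y = 0 := by
      rw [Matrix.mulVec_transpose, dotProduct_comm, ← Matrix.dotProduct_mulVec, h2]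
      simp
    simp only [star_trivial]
    linarith [this, hct]
  have hx0 : x = 0 := by
    have : x ∈ LinearMap.ker P.mulVecLin ⊓ LinearMap.ker C.mulVecLin := by
      constructor <;> simp [LinearMap.mem_ker, Matrix.mulVecLin_apply, hPx, h2]
    rw [hker] at this
    simpa using this
  have hCty : Cᵀ *ᵥ y = 0 := by
    rw [hx0] at h1; simpa using h1
  have hy0 : y = 0 := by
    obtain ⟨z, hz⟩ := hC y
    have hz' : C *ᵥ z = y := hz
    have h3 : z ⬝ᵥ Cᵀ *ᵥ y = 0 := by rw [hCty]; simp
    rw [Matrix.dotProduct_mulVec, Matrix.vecMul_transpose, hz'] at h3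
    exact (dotProduct_self_eq_zero (v := y)).mp h3
  apply hv
  rw [hv', hx0, hy0]
  ext (i | j) <;> simp
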